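/- Fourier slice theorem: for integrable f: ℝ² → ℂ, the 1D Fourier transform of the Radon projection t ↦ Rf(α,t) evaluated at frequency r equals the 2D Fourier transform of f evaluated at the point (−r sin α, r cos α); i.e., ∫_{ℝ} Rf(α,t) e^{−2πi r t} dt = F₂f(−r sin α, r cos α). -/

import Mathlib

open Real MeasureTheory Complex

noncomputable def radonC (f : ℝ × ℝ → ℂ) (α t : ℝ) : ℂ :=
  ∫ z : ℝ, f (z * Real.cos α - t * Real.sin α, z * Real.sin α + t * Real.cos α)

noncomputable def fourier2D (f : ℝ × ℝ → ℂ) (ξ₁ ξ₂ : ℝ) : ℂ :=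
  ∫ p : ℝ × ℝ, f p * Complex.exp (-2 * Real.pi * Complex.I * (p.1 * ξ₁ + p.2 * ξ₂))

/-!
The map `(t, z) ↦ (z cos α − t sin α, z sin α + t cos α)` is a linear involution of the plane, so
its determinant is `±1` and it preserves Lebesgue measure; along it, the phase of `F₂f` at
`(−r sin α, r cos α)` becomes `r t`. Hence the 1D Fourier transform of `Rf(α, ·)` is an iterated
integral which, by Fubini and this change of variables, is `F₂f(−r sin α, r cos α)`.
-/

section Involutive

variable {E : Type*} [NormedAddCommGroup E] [NormedSpace ℝ E] [MeasurableSpace E] [BorelSpace E]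
  [FiniteDimensional ℝ E] (μ : Measure E) [μ.IsAddHaarMeasure] {L : E →ₗ[ℝ] E}

theorem LinearMap.measurePreserving_of_involutive (hL : Function.Involutive L) :
    MeasurePreserving L μ μ := by
  have hdet_sq : LinearMap.det L * LinearMap.det L = 1 := by
    rw [← map_mul, show L * L = 1 from LinearMap.ext hL, map_one]
  have habs : |LinearMap.det L| = 1 := by
    rcases mul_self_eq_one_iff.1 hdet_sq with h | h <;> simp [h]
  refine ⟨L.continuous_of_finiteDimensional.measurable, ?_⟩
  rw [Measure.map_linearMap_addHaar_eq_smul_addHaar μ (left_ne_zero_of_mul_eq_one hdet_sq),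
    abs_inv, habs, inv_one, ENNReal.ofReal_one, one_smul]

theorem LinearMap.integral_comp_of_involutive {G : Type*} [NormedAddCommGroup G]
    [NormedSpace ℝ G] (hL : Function.Involutive L) (g : E → G) :
    ∫ x, g (L x) ∂μ = ∫ x, g x ∂μ :=
  (L.measurePreserving_of_involutive μ hL).integral_comp'
    (f := MeasurableEquiv.ofInvolutive L hL L.continuous_of_finiteDimensional.measurable) g

end Involutive

theorem MeasureTheory.Integrable.mul_exp_neg_two_pi_I_mul {α : Type*} [MeasurableSpace α]
    {μ : Measure α} {f : α → ℂ} (hf : Integrable f μ) {φ : α → ℝ} (hφ : Measurable φ) :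
    Integrable (fun x ↦ f x * exp (-2 * π * I * φ x)) μ := by
  refine hf.mul_bdd (c := 1) (by fun_prop) (.of_forall fun x ↦ ?_)
  rw [show -2 * π * I * φ x = ↑(-2 * π * φ x) * I by push_cast; ring, norm_exp_ofReal_mul_I]

noncomputable def sliceReflection (α : ℝ) : (ℝ × ℝ) →ₗ[ℝ] ℝ × ℝ where
  toFun p := (p.2 * Real.cos α - p.1 * Real.sin α, p.2 * Real.sin α + p.1 * Real.cos α)
  map_add' p q := by ext <;> simp only [Prod.fst_add, Prod.snd_add] <;> ring
  map_smul' c p := by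
    ext <;> simp only [Prod.smul_fst, Prod.smul_snd, smul_eq_mul, RingHom.id_apply] <;> ring

theorem sliceReflection_apply (α t z : ℝ) :
    sliceReflection α (t, z) =
      (z * Real.cos α - t * Real.sin α, z * Real.sin α + t * Real.cos α) := rfl

theorem sliceReflection_involutive (α : ℝ) : Function.Involutive (sliceReflection α) := by
  rintro ⟨t, z⟩
  simp only [sliceReflection_apply, Prod.mk.injEq]
  constructor
  · linear_combination t * Real.sin_sq_add_cos_sq α
  · linear_combination z * Real.sin_sq_add_cos_sq α

theorem sliceReflection_phase (α r : ℝ) (p : ℝ × ℝ) :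
    (sliceReflection α p).1 * (-r * Real.sin α) + (sliceReflection α p).2 * (r * Real.cos α) =
      r * p.1 := by
  obtain ⟨t, z⟩ := p
  simp only [sliceReflection_apply]
  linear_combination r * t * Real.sin_sq_add_cos_sq α

/-- Fourier slice theorem: the 1D Fourier transform of the Radon projection
`t ↦ Rf(α,t)` at frequency `r` equals the 2D Fourier transform of `f` at
`(−r sin α, r cos α)`. -/
theorem fourier_slice (f : ℝ × ℝ → ℂ) (hf : Integrable f) (α r : ℝ) :
    (∫ t : ℝ, radonC f α t * Complex.exp (-2 * Real.pi * Complex.I * r * t)) =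
      fourier2D f (-r * Real.sin α) (r * Real.cos α) := by
  set g : ℝ × ℝ → ℂ := fun p ↦
    f p * exp (-2 * π * I * (p.1 * (-r * Real.sin α : ℝ) + p.2 * (r * Real.cos α : ℝ)))
  have hg : Integrable g := by
    simpa [g] using hf.mul_exp_neg_two_pi_I_mul
      (φ := fun p ↦ p.1 * (-r * Real.sin α) + p.2 * (r * Real.cos α)) (by fun_prop)
  have hgL : Integrable (g ∘ sliceReflection α) (volume.prod volume) :=
    ((sliceReflection α).measurePreserving_of_involutive volume
      (sliceReflection_involutive α)).integrable_comp_of_integrable hg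
  have radon_phase (t : ℝ) :
      radonC f α t * exp (-2 * π * I * r * t) = ∫ z, g (sliceReflection α (t, z)) := by
    rw [radonC, ← integral_mul_const]
    congr 1 with z
    simp only [g, ← sliceReflection_apply]
    congr 2
    rw [mul_assoc _ (r : ℂ)]
    congr 1
    exact_mod_cast (sliceReflection_phase α r (t, z)).symm
  calc (∫ t, radonC f α t * exp (-2 * π * I * r * t))
      = ∫ p, g (sliceReflection α p) ∂(volume.prod volume) := by
        simp_rw [radon_phase]
        exact (integral_prod _ hgL).symm
    _ = fourier2D f (-r * Real.sin α) (r * Real.cos α) :=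
        (sliceReflection α).integral_comp_of_involutive volume (sliceReflection_involutive α) g
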